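/- arXiv:1408.6717 — 2 statements merged into one kernel-verified Lean document; each statement's English description precedes it below -/
import Mathlib

section
/- In the polynomial ring ℤ[x,y,z], the ideal quotient (x^n, y^n, z^n) : (x+y+z)^{n-1} equals the annihilator, under the contraction action of ℤ[x,y,z] on its graded dual, of the element Φ = Σ binom(n-1; a,b,c) (x^{n-1-a} y^{n-1-b} z^{n-1-c})^*, where the sum runs over all triples (a,b,c) of non-negative integers with a+b+c = n-1. -/
/-!
The ideal `(x^n, y^n, z^n)` is the annihilator of the dual monomial `((xyz)^(n-1))^*`, and for
every functional `Φ` and polynomial `P` one has `ann(P(Φ)) = ann(Φ) : P`, because contraction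
by `P` is `Φ ∘ (· * P)`. By the multinomial theorem, `Φ` itself is `(x+y+z)^(n-1)` contracted
against `((xyz)^(n-1))^*`.
-/

open MvPolynomial

/-- The annihilator, under the contraction action of `S = ℤ[x,y,z]` on its graded dual,
of a functional `Φ`: the ideal of all `f` with `f(Φ) = 0`, i.e. `Φ(f·g) = 0` for all `g`. -/
def annIdeal {R σ : Type*} [CommRing R] (Φ : Module.Dual R (MvPolynomial σ R)) :
    Ideal (MvPolynomial σ R) where
  carrier := {f | ∀ g, Φ (f * g) = 0}
  zero_mem' := by intro g; rw [zero_mul, map_zero]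
  add_mem' := by
    intro a b ha hb g
    rw [add_mul, map_add, ha g, hb g, add_zero]
  smul_mem' := by
    intro c f hf g
    rw [smul_eq_mul, show c * f * g = f * (c * g) by ring]
    exact hf (c * g)

namespace MvPolynomial

variable {R σ : Type*} [CommRing R]

theorem mem_annIdeal {Φ : Module.Dual R (MvPolynomial σ R)} {f : MvPolynomial σ R} :
    f ∈ annIdeal Φ ↔ ∀ g, Φ (f * g) = 0 :=
  Iff.rfl

theorem annIdeal_comp_mulRight (Φ : Module.Dual R (MvPolynomial σ R)) (P : MvPolynomial σ R) :
    annIdeal (Φ ∘ₗ LinearMap.mulRight R P) =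
      (annIdeal Φ).colon (Ideal.span {P} : Set (MvPolynomial σ R)) := by
  ext f
  simp only [Ideal.mem_colon_span_singleton, mem_annIdeal, LinearMap.comp_apply,
    LinearMap.mulRight_apply, mul_right_comm f _ P]

theorem forall_coeff_mul_eq_zero_iff {p : MvPolynomial σ R} {m : σ →₀ ℕ} :
    (∀ g, coeff m (p * g) = 0) ↔ ∀ d ∈ p.support, ¬ d ≤ m := by
  classical
  constructor
  · intro h d hd hdm
    have := h (monomial (m - d) 1)
    rw [coeff_mul_monomial', if_pos tsub_le_self, tsub_tsub_cancel_of_le hdm, mul_one] at this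
    exact mem_support_iff.mp hd this
  · intro h g
    rw [coeff_mul]
    refine Finset.sum_eq_zero fun uv huv => ?_
    have hle : uv.1 ≤ m := (Finset.HasAntidiagonal.mem_antidiagonal.mp huv) ▸ le_self_add
    rw [notMem_support_iff.mp fun hu => h _ hu hle, zero_mul]

theorem annIdeal_lcoeff (m : σ →₀ ℕ) :
    annIdeal (lcoeff R m) = Ideal.span (Set.range fun i => X i ^ (m i + 1)) := by
  ext p
  have hgen : (Set.range fun i => (X i ^ (m i + 1) : MvPolynomial σ R)) =
      (fun s => monomial s (1 : R)) '' Set.range fun i => Finsupp.single i (m i + 1) := by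
    rw [← Set.range_comp]
    simp only [Function.comp_def, X_pow_eq_monomial]
  rw [mem_annIdeal, hgen, mem_ideal_span_monomial_image]
  simp only [lcoeff_apply, forall_coeff_mul_eq_zero_iff, Set.exists_range_iff,
    Finsupp.single_le_iff, Order.add_one_le_iff]
  simp only [Finsupp.le_def, not_forall, not_le]

theorem sum_X_pow_eq_sum_piAntidiag [Fintype σ] [DecidableEq σ] (k : ℕ) :
    (∑ i, X i : MvPolynomial σ R) ^ k =
      ∑ c ∈ Finset.piAntidiag Finset.univ k,
        C (Nat.multinomial Finset.univ c : R) * monomial (Finsupp.equivFunOnFinite.symm c) 1 := by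
  rw [Finset.sum_pow_eq_sum_piAntidiag]
  refine Finset.sum_congr rfl fun c _ => ?_
  rw [prod_X_pow, map_natCast]
  congr
  exact Finsupp.ext fun i => by simp

theorem sum_multinomial_smul_lcoeff_eq [Fintype σ] [DecidableEq σ] (k : ℕ) :
    ∑ c ∈ Finset.piAntidiag Finset.univ k,
        (Nat.multinomial Finset.univ c : R) •
          lcoeff R (Finsupp.equivFunOnFinite.symm fun i => k - c i) =
      lcoeff R (Finsupp.equivFunOnFinite.symm fun _ => k) ∘ₗ
        LinearMap.mulRight R ((∑ i, X i : MvPolynomial σ R) ^ k) := by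
  refine LinearMap.ext fun h => ?_
  rw [LinearMap.comp_apply, LinearMap.mulRight_apply, sum_X_pow_eq_sum_piAntidiag, Finset.mul_sum,
    map_sum, LinearMap.sum_apply]
  refine Finset.sum_congr rfl fun c hc => ?_
  have hck : ∀ i, c i ≤ k := fun i => (Finset.mem_piAntidiag.mp hc).1 ▸
    Finset.single_le_sum (fun _ _ => Nat.zero_le _) (Finset.mem_univ i)
  have hle : Finsupp.equivFunOnFinite.symm c ≤ Finsupp.equivFunOnFinite.symm fun _ => k := hck
  simp only [LinearMap.smul_apply, lcoeff_apply, smul_eq_mul]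
  rw [mul_left_comm, coeff_C_mul, coeff_mul_monomial', if_pos hle, mul_one]
  congr 2
  exact Finsupp.ext fun i => rfl

end MvPolynomial

/-- The Macaulay inverse system of `(x^n, y^n, z^n) : (x+y+z)^{n-1}`:  this ideal quotient
equals the annihilator of `Φ = Σ_{a+b+c=n-1} (n-1 choose a,b,c)·(x^{n-1-a}y^{n-1-b}z^{n-1-c})^*`. -/
theorem colon_eq_ann_inverse_system (n : ℕ) (hn : 1 ≤ n) :
    ((Ideal.span {(X 0 : MvPolynomial (Fin 3) ℤ) ^ n, X 1 ^ n, X 2 ^ n}).colon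
        ((Ideal.span {(X 0 + X 1 + X 2) ^ (n - 1)} : Ideal (MvPolynomial (Fin 3) ℤ)) :
          Set (MvPolynomial (Fin 3) ℤ))) =
      annIdeal (∑ c ∈ Finset.Nat.antidiagonalTuple 3 (n - 1),
        (Nat.multinomial Finset.univ c : ℤ) •
          lcoeff ℤ (Finsupp.equivFunOnFinite.symm fun i => n - 1 - c i)) := by
  have hgens : ({X 0 ^ n, X 1 ^ n, X 2 ^ n} : Set (MvPolynomial (Fin 3) ℤ)) =
      Set.range fun i =>
        X i ^ ((Finsupp.equivFunOnFinite.symm fun _ => n - 1 : Fin 3 →₀ ℕ) i + 1) := by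
    ext p
    simp [Fin.exists_fin_succ, Nat.sub_add_cancel hn, eq_comm]
  rw [← Finset.piAntidiag_univ_fin_eq_antidiagonalTuple, sum_multinomial_smul_lcoeff_eq,
    annIdeal_comp_mulRight, annIdeal_lcoeff, ← hgens, Fin.sum_univ_three]
end

section
/- Let k be a field and S = k[x,y,z]. The ideal I generated by the 6×6 Pfaffians (maximal-order Pfaffians) of the 7×7 alternating matrix M with rows [0,x,0,0,0,0,z; -x,0,y,0,0,z,0; 0,-y,0,x,z,0,0; 0,0,-x,0,y,0,0; 0,0,-z,-y,0,x,0; 0,-z,0,0,-x,0,y; -z,0,0,0,0,-y,0] is a height-3 ideal whose quotient S/I is Artinian, i.e., some power of each variable x, y, z lies in I. -/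
open MvPolynomial

/-- The Pfaffian of an `n × n` matrix (nonzero only for alternating matrices of even size,
where it satisfies `Pf(A)² = det A`), defined by recursive expansion along the first row:
`Pf(A) = Σ_j (-1)^j A 0 (j+1) · Pf(A with rows and columns 0 and j+1 deleted)`. -/
noncomputable def pfaff {R : Type*} [CommRing R] : (n : ℕ) → Matrix (Fin n) (Fin n) R → R
  | 0, _ => 1
  | 1, _ => 0
  | (n + 2), A =>
      ∑ j : Fin (n + 1), (-1 : R) ^ (j : ℕ) * A 0 j.succ *
        pfaff n ((A.submatrix Fin.succ Fin.succ).submatrix j.succAbove j.succAbove)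

/-- The `7×7` alternating Buchsbaum–Eisenbud matrix with linear entries in `k[x,y,z]`. -/
noncomputable def BEmatrix (k : Type*) [Field k] :
    Matrix (Fin 7) (Fin 7) (MvPolynomial (Fin 3) k) :=
  !![0, X 0, 0, 0, 0, 0, X 2;
     -X 0, 0, X 1, 0, 0, X 2, 0;
     0, -X 1, 0, X 0, X 2, 0, 0;
     0, 0, -X 0, 0, X 1, 0, 0;
     0, 0, -X 2, -X 1, 0, X 0, 0;
     0, -X 2, 0, 0, -X 0, 0, X 1;
     -X 2, 0, 0, 0, 0, -X 1, 0]

section Aux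

variable {R : Type*}

lemma vec7_four (a b c d e f g : R) : ![a, b, c, d, e, f, g] 4 = e := rfl
lemma vec7_five (a b c d e f g : R) : ![a, b, c, d, e, f, g] 5 = f := rfl
lemma vec7_six (a b c d e f g : R) : ![a, b, c, d, e, f, g] 6 = g := rfl
lemma vec6_four (a b c d e f : R) : ![a, b, c, d, e, f] 4 = e := rfl
lemma vec6_five (a b c d e f : R) : ![a, b, c, d, e, f] 5 = f := rfl
lemma vec5_four (a b c d e : R) : ![a, b, c, d, e] 4 = e := rfl

lemma mk56_1 (h : ((1 : Fin 5) : ℕ) < 6) : (⟨((1 : Fin 5) : ℕ), h⟩ : Fin 6) = 1 := rfl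
lemma mk56_2 (h : ((2 : Fin 5) : ℕ) < 6) : (⟨((2 : Fin 5) : ℕ), h⟩ : Fin 6) = 2 := rfl
lemma mk56_3 (h : ((3 : Fin 5) : ℕ) < 6) : (⟨((3 : Fin 5) : ℕ), h⟩ : Fin 6) = 3 := rfl
lemma mk56_4 (h : ((4 : Fin 5) : ℕ) < 6) : (⟨((4 : Fin 5) : ℕ), h⟩ : Fin 6) = 4 := rfl
lemma mk45_1 (h : ((1 : Fin 4) : ℕ) < 5) : (⟨((1 : Fin 4) : ℕ), h⟩ : Fin 5) = 1 := rfl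
lemma mk45_2 (h : ((2 : Fin 4) : ℕ) < 5) : (⟨((2 : Fin 4) : ℕ), h⟩ : Fin 5) = 2 := rfl
lemma mk45_3 (h : ((3 : Fin 4) : ℕ) < 5) : (⟨((3 : Fin 4) : ℕ), h⟩ : Fin 5) = 3 := rfl
lemma mk34_1 (h : ((1 : Fin 3) : ℕ) < 4) : (⟨((1 : Fin 3) : ℕ), h⟩ : Fin 4) = 1 := rfl
lemma mk34_2 (h : ((2 : Fin 3) : ℕ) < 4) : (⟨((2 : Fin 3) : ℕ), h⟩ : Fin 4) = 2 := rfl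
lemma mk23_1 (h : ((1 : Fin 2) : ℕ) < 3) : (⟨((1 : Fin 2) : ℕ), h⟩ : Fin 3) = 1 := rfl

variable (k : Type*) [Field k]

/-- The vector of the seven maximal Pfaffians of `BEmatrix`. -/
noncomputable def genVec : Fin 7 → MvPolynomial (Fin 3) k :=
  ![X 1 ^ 3, X 0 ^ 2 * X 2, X 0 * X 1 ^ 2 + X 1 * X 2 ^ 2,
    2 * (X 0 * X 1 * X 2) + X 2 ^ 3, X 0 ^ 2 * X 1 + X 0 * X 2 ^ 2,
    X 1 ^ 2 * X 2, X 0 ^ 3]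

set_option maxHeartbeats 2000000 in
/-- Explicit formulas for the seven maximal Pfaffians of `BEmatrix`. -/
lemma genAll (i : Fin 7) :
    pfaff 6 ((BEmatrix k).submatrix i.succAbove i.succAbove) = genVec k i := by
  fin_cases i <;>
  · simp (config := { decide := true }) [pfaff, BEmatrix, genVec, Fin.sum_univ_succ,
      Fin.succAbove, Matrix.submatrix_apply, Fin.castSucc, Fin.castAdd,
      Fin.castLE, Fin.succ, vec7_four, vec7_five, vec7_six, vec6_four, vec6_five, vec5_four,
      mk56_1, mk56_2, mk56_3, mk56_4, mk45_1, mk45_2, mk45_3, mk34_1, mk34_2, mk23_1,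
      Matrix.cons_val_two, Matrix.cons_val_three, Matrix.cons_val_four, Matrix.tail_cons]
    ring

/-- Membership in the span of the variables is characterized by vanishing constant
coefficient. -/
lemma mem_span_XXX_iff (f : MvPolynomial (Fin 3) k) :
    f ∈ Ideal.span {(X 0 : MvPolynomial (Fin 3) k), X 1, X 2} ↔ constantCoeff f = 0 := by
  have hset : ({X 0, X 1, X 2} : Set (MvPolynomial (Fin 3) k)) =
      MvPolynomial.X '' (Set.univ : Set (Fin 3)) := by
    ext p
    simp only [Set.image_univ, Set.mem_range, Set.mem_insert_iff, Set.mem_singleton_iff]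
    constructor
    · rintro (rfl | rfl | rfl)
      exacts [⟨0, rfl⟩, ⟨1, rfl⟩, ⟨2, rfl⟩]
    · rintro ⟨i, rfl⟩
      fin_cases i <;> simp
  rw [hset, mem_ideal_span_X_image]
  constructor
  · intro h
    by_contra hc
    have h0 : (0 : Fin 3 →₀ ℕ) ∈ f.support := by
      rw [MvPolynomial.mem_support_iff]
      simpa [MvPolynomial.constantCoeff_eq] using hc
    obtain ⟨i, -, hi⟩ := h 0 h0
    simp at hi
  · intro h m hm
    by_contra hc
    push_neg at hc
    have : m = 0 := by
      ext i
      simpa using hc i (Set.mem_univ i)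
    rw [this, MvPolynomial.mem_support_iff] at hm
    exact hm (by simpa [MvPolynomial.constantCoeff_eq] using h)

end Aux

/-- The ideal generated by the seven maximal-order (`6×6`) Pfaffians of the alternating
matrix `BEmatrix` has radical equal to the maximal ideal `(x, y, z)`; equivalently, the
quotient by it is Artinian. -/
theorem radical_pfaffian_ideal (k : Type*) [Field k] :
    (Ideal.span (Set.range fun i : Fin 7 =>
        pfaff 6 ((BEmatrix k).submatrix i.succAbove i.succAbove))).radical =
      Ideal.span {(X 0 : MvPolynomial (Fin 3) k), X 1, X 2} := by
  set I := Ideal.span (Set.range fun i : Fin 7 =>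
      pfaff 6 ((BEmatrix k).submatrix i.succAbove i.succAbove)) with hI
  have hGmem : ∀ i : Fin 7, genVec k i ∈ I := by
    intro i
    rw [← genAll k i]
    exact Ideal.subset_span ⟨i, rfl⟩
  apply le_antisymm
  · -- radical I ≤ (x, y, z)
    intro f hf
    obtain ⟨n, hfn⟩ := hf
    rw [mem_span_XXX_iff]
    have hIm : I ≤ Ideal.span {(X 0 : MvPolynomial (Fin 3) k), X 1, X 2} := by
      rw [hI, Ideal.span_le]
      rintro _ ⟨i, rfl⟩
      simp only
      rw [SetLike.mem_coe, mem_span_XXX_iff, genAll k i]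
      fin_cases i <;> simp [genVec, vec7_four, vec7_five, vec7_six]
    have hc := (mem_span_XXX_iff k (f ^ n)).mp (hIm hfn)
    rw [map_pow] at hc
    exact (pow_eq_zero_iff'.mp hc).1
  · -- (x, y, z) ≤ radical I
    rw [Ideal.span_le]
    rintro p hp
    simp only [Set.mem_insert_iff, Set.mem_singleton_iff] at hp
    rcases hp with rfl | rfl | rfl
    · exact ⟨3, by simpa [genVec, vec7_six] using hGmem 6⟩
    · exact ⟨3, by simpa [genVec] using hGmem 0⟩
    · refine ⟨6, ?_⟩
      have key : (X 2 : MvPolynomial (Fin 3) k) ^ 6 =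
          (genVec k 3 - 4 * (X 0 * X 1 * X 2)) * genVec k 3 +
            (4 * (X 1 ^ 2 * X 2)) * genVec k 1 := by
        simp only [genVec, Matrix.cons_val_zero, Matrix.cons_val_one, Matrix.head_cons,
          Matrix.cons_val_two, Matrix.cons_val_three, Matrix.tail_cons]
        ring
      rw [key]
      exact Ideal.add_mem _
        (Ideal.mul_mem_left _ _ (hGmem 3))
        (Ideal.mul_mem_left _ _ (hGmem 1))
end
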